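/- arXiv:1203.5253 — 3 statements merged into one kernel-verified Lean document; each statement's English description precedes it below -/
import Mathlib

section
/- Let n ≥ 2 be an integer and 1 ≤ k ≤ n−1 an integer. Let α, β be real with 1 < α < β and suppose (α^k β^{n-k} − 1)/(β^n − 1) < (n-k)/n. Then there exists a unique λ ∈ (1, β) satisfying (n−k)(β/λ)^k + k(λ/β)^{n−k} = n α^k. -/
/-!
Substituting `m = n - k`, the left-hand side is
`f l = m (β / l) ^ k + k (l / β) ^ m`, whose derivative `k m / l * ((l / β) ^ m - (β / l) ^ k)`
is negative on `(0, β)`. So `f` is strictly decreasing on `[1, β]`, from `f 1` down to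
`f β = n < n α ^ k`; clearing denominators, the hypothesis says exactly that `n α ^ k < f 1`.
The intermediate value theorem and strict monotonicity give the unique `λ`.
-/

open Set

noncomputable def powerBalance (m k : ℕ) (β l : ℝ) : ℝ :=
  m * (β / l) ^ k + k * (l / β) ^ m

section PowerBalance

variable {m k : ℕ} {β : ℝ}

theorem hasDerivAt_powerBalance {l : ℝ} (hβ : β ≠ 0) (hl : l ≠ 0) :
    HasDerivAt (powerBalance m k β) (k * m / l * ((l / β) ^ m - (β / l) ^ k)) l := by
  have hinv := ((hasDerivAt_inv hl).const_mul β).fun_pow k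
  have hdiv := ((hasDerivAt_id' l).div_const β).fun_pow m
  refine ((hinv.const_mul (m : ℝ)).add (hdiv.const_mul (k : ℝ))).congr_deriv ?_
  rcases k with _ | k
  · simp
  rcases m with _ | m
  · simp
  simp only [Nat.add_sub_cancel, div_pow, mul_pow, inv_pow, pow_succ]
  field_simp
  ring

theorem strictAntiOn_powerBalance (hk : 0 < k) (hm : 0 < m) (hβ : 0 < β) :
    StrictAntiOn (powerBalance m k β) (Ioc 0 β) := by
  refine strictAntiOn_of_deriv_neg (convex_Ioc 0 β) (fun l hl => ?_) fun l hl => ?_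
  · exact (hasDerivAt_powerBalance hβ.ne' hl.1.ne').continuousAt.continuousWithinAt
  rw [interior_Ioc] at hl
  obtain ⟨hl0, hlβ⟩ := hl
  rw [(hasDerivAt_powerBalance hβ.ne' hl0.ne').deriv]
  have hsmall : (l / β) ^ m < 1 := pow_lt_one₀ (by positivity) ((div_lt_one hβ).2 hlβ) hm.ne'
  have hlarge : 1 < (β / l) ^ k := one_lt_pow₀ ((one_lt_div hl0).2 hlβ) hk.ne'
  exact mul_neg_of_pos_of_neg (by positivity) (by linarith)

theorem powerBalance_self (hβ : β ≠ 0) : powerBalance m k β β = m + k := by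
  simp [powerBalance, hβ]

theorem lt_powerBalance_one_iff (hβ : 0 < β) (c : ℝ) :
    c < powerBalance m k β 1 ↔ c * β ^ m < m * β ^ (k + m) + k := by
  have hβm : 0 < β ^ m := by positivity
  have h : powerBalance m k β 1 * β ^ m = m * β ^ (k + m) + k := by
    rw [powerBalance, pow_add, div_one, one_div, add_mul, inv_pow, mul_assoc,
      inv_mul_cancel_right₀ hβm.ne']
  rw [← h, mul_lt_mul_iff_left₀ hβm]

end PowerBalance

theorem existsUnique_mem_Ioo_of_strictAntiOn {f : ℝ → ℝ} {a b y : ℝ} (hab : a ≤ b)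
    (hcont : ContinuousOn f (Icc a b)) (hanti : StrictAntiOn f (Icc a b))
    (hb : f b < y) (ha : y < f a) : ∃! x, x ∈ Ioo a b ∧ f x = y := by
  obtain ⟨x, hx, rfl⟩ := intermediate_value_Ioo' hab hcont ⟨hb, ha⟩
  exact ⟨x, ⟨hx, rfl⟩, fun x' ⟨hx', hfx'⟩ =>
    hanti.injOn (Ioo_subset_Icc_self hx') (Ioo_subset_Icc_self hx) hfx'⟩

theorem stmt_3_general (n k : ℕ) (hk : 1 ≤ k) (hkn : k ≤ n - 1)
    (α β : ℝ) (hα : 1 < α) (hαβ : α < β)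
    (hyp : (α ^ k * β ^ (n - k) - 1) / (β ^ n - 1) < ((n : ℝ) - k) / n) :
    ∃! l : ℝ, l ∈ Set.Ioo (1 : ℝ) β ∧
      ((n : ℝ) - k) * (β / l) ^ k + (k : ℝ) * (l / β) ^ (n - k) = (n : ℝ) * α ^ k := by
  obtain ⟨m, rfl⟩ : ∃ m, n = k + m := ⟨n - k, by omega⟩
  have hm : 0 < m := by omega
  have hβ1 : 1 < β := hα.trans hαβ
  have hβ : 0 < β := one_pos.trans hβ1
  have hcoef : ((k + m : ℕ) : ℝ) - k = m := by push_cast; ring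
  simp only [Nat.add_sub_cancel_left, hcoef] at hyp ⊢
  have hcont : ContinuousOn (powerBalance m k β) (Icc 1 β) := fun l hl =>
    (hasDerivAt_powerBalance hβ.ne' (one_pos.trans_le hl.1).ne').continuousAt.continuousWithinAt
  have hanti := (strictAntiOn_powerBalance hk hm hβ).mono
    (Icc_subset_Ioc_iff hβ1.le |>.2 ⟨one_pos, le_rfl⟩)
  refine existsUnique_mem_Ioo_of_strictAntiOn (f := powerBalance m k β) hβ1.le hcont hanti ?_ ?_
  · have hαk : 1 < α ^ k := one_lt_pow₀ hα (by omega)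
    have hn : (0 : ℝ) < (k + m : ℕ) := by exact_mod_cast (by omega : 0 < k + m)
    have hscaled := mul_lt_mul_of_pos_left hαk hn
    rw [powerBalance_self hβ.ne']
    push_cast at hscaled ⊢
    linarith
  · have hβn : 1 < β ^ (k + m) := one_lt_pow₀ hβ1 (by omega)
    rw [div_lt_div_iff₀ (by linarith) (by positivity)] at hyp
    rw [lt_powerBalance_one_iff hβ]
    push_cast at hyp ⊢
    linarith

/-- If `(α^k β^{n-k} − 1)/(β^n − 1) < (n-k)/n`, there is a unique `λ ∈ (1, β)`
with `(n−k)(β/λ)^k + k(λ/β)^{n−k} = n α^k`. -/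
theorem stmt_3 (n k : ℕ) (hn : 2 ≤ n) (hk : 1 ≤ k) (hkn : k ≤ n - 1)
    (α β : ℝ) (hα : 1 < α) (hαβ : α < β)
    (hyp : (α ^ k * β ^ (n - k) - 1) / (β ^ n - 1) < ((n : ℝ) - k) / n) :
    ∃! l : ℝ, l ∈ Set.Ioo (1 : ℝ) β ∧
      ((n : ℝ) - k) * (β / l) ^ k + (k : ℝ) * (l / β) ^ (n - k) = (n : ℝ) * α ^ k :=
  stmt_3_general n k hk hkn α β hα hαβ hyp
end

section
/- Let n ≥ 2 and β > α > 1. A twice-differentiable function f on [1,β] that satisfies f'' + (n−1)f'/x − (n−1)f/x² = 0 on the open set {x : f(x) > 1}, equals 1 off this set, has f(1) = 1, f(β) = α, f ≥ 1 and f continuously differentiable, is a critical point of the energy E(f) = (1/2)∫₁^β (x^{n-1} f'² + (n−1)x^{n-3} f²) dx over K = { f ∈ H¹ : f(1)=1, f(β)=α, f ≥ 1 } in the sense that for all h ∈ H¹ with h(1)=h(β)=0 and f + th ∈ K for small t > 0, the one-sided derivative (d/dt)|_{t=0⁺} E(f+th) ≥ 0. -/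
/-!
Along `t ↦ f + t • h` the energy is the quadratic polynomial `E f + t ∫ e(f,h) + t² E h`, where `e`
is the bilinear form of `E`, so the one-sided derivative at `0` is the first variation `∫ e(f,h)`.
Integrate it by parts against the flux `x^{n-1} f' h`, which vanishes at both endpoints: on
`{f > 1}` the ODE cancels the integrand, and on the contact set `{f = 1}` both `f'` and `f''`
vanish almost everywhere, because almost every point of a subset of `ℝ` is an accumulation point
of it. What remains is `∫_{f = 1} (n-1) x^{n-3} h`, which is nonnegative because admissibility of
`h` forces `h ≥ 0` on the contact set.
-/

open MeasureTheory

/-- The energy functional `E(f) = (1/2)∫₁^β (x^{n-1} f'² + (n−1) x^{n-3} f²) dx`. -/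
noncomputable def energy (n : ℕ) (β : ℝ) (f : ℝ → ℝ) : ℝ :=
  (1 / 2) * ∫ x in (1 : ℝ)..β,
    (x ^ ((n : ℤ) - 1) * (deriv f x) ^ 2 + ((n : ℝ) - 1) * x ^ ((n : ℤ) - 3) * (f x) ^ 2)

/-- Membership in the convex set `K = {f ∈ H¹([1,β]) : f(1)=1, f(β)=α, f ≥ 1}`,
with `H¹`-regularity expressed via continuity, differentiability and integrability
of the energy integrand. -/
def memK (n : ℕ) (α β : ℝ) (f : ℝ → ℝ) : Prop :=
  ContinuousOn f (Set.Icc 1 β) ∧ (∀ x ∈ Set.Ioo (1 : ℝ) β, DifferentiableAt ℝ f x) ∧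
  IntervalIntegrable
    (fun x => x ^ ((n : ℤ) - 1) * (deriv f x) ^ 2 + ((n : ℝ) - 1) * x ^ ((n : ℤ) - 3) * (f x) ^ 2)
    volume 1 β ∧
  f 1 = 1 ∧ f β = α ∧ ∀ x ∈ Set.Icc (1 : ℝ) β, 1 ≤ f x

open Set Filter Topology Interval

theorem ae_deriv_eq_zero_of_eqOn_const {F : Type*} [NormedAddCommGroup F] [NormedSpace ℝ F]
    {μ : Measure ℝ} [NullSingletonClass μ] {g : ℝ → F} {s : Set ℝ} {c : F}
    (hg : EqOn g (fun _ => c) s) :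
    ∀ᵐ x ∂μ, x ∈ s → deriv g x = 0 := by
  -- Off the countable set of points isolated on the right in `s`, `g` is frequently equal to `c`.
  have hnull : μ {x ∈ s | 𝓝[s ∩ Ioi x] x = ⊥} = 0 :=
    countable_setOfPred_isolated_right_within.measure_zero μ
  filter_upwards [measure_eq_zero_iff_ae_notMem.1 hnull] with x hx hxs
  have : (𝓝[s ∩ Ioi x] x).NeBot := ⟨fun h => hx ⟨hxs, h⟩⟩
  refine deriv_zero_of_frequently_const (c := c) ?_
  have hle : 𝓝[s ∩ Ioi x] x ≤ 𝓝[≠] x :=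
    nhdsWithin_mono x fun y (hy : y ∈ s ∩ Ioi x) => ne_of_gt hy.2
  refine (Eventually.frequently ?_).filter_mono hle
  filter_upwards [self_mem_nhdsWithin] with y hy using hg hy.1

theorem ae_deriv_eq_zero_and_deriv_deriv_eq_zero_of_eq {μ : Measure ℝ} [NullSingletonClass μ]
    (f : ℝ → ℝ) (c : ℝ) :
    ∀ᵐ x ∂μ, f x = c → deriv f x = 0 ∧ deriv (deriv f) x = 0 := by
  have h₁ := ae_deriv_eq_zero_of_eqOn_const (μ := μ) (s := {x | f x = c}) fun _ hx => hx
  have h₂ := ae_deriv_eq_zero_of_eqOn_const (μ := μ) (g := deriv f)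
    (s := {x | f x = c ∧ deriv f x = 0}) fun _ hx => hx.2
  filter_upwards [h₁, h₂] with x hx₁ hx₂ hx
  exact ⟨hx₁ hx, hx₂ ⟨hx, hx₁ hx⟩⟩

theorem IntervalIntegrable.of_add_mul_add_sq_mul {μ : Measure ℝ} {a b s t : ℝ} {A B C : ℝ → ℝ}
    (hs : s ≠ 0) (ht : t ≠ 0) (hst : s ≠ t) (hA : IntervalIntegrable A μ a b)
    (hPs : IntervalIntegrable (fun x => A x + s * B x + s ^ 2 * C x) μ a b)
    (hPt : IntervalIntegrable (fun x => A x + t * B x + t ^ 2 * C x) μ a b) :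
    IntervalIntegrable B μ a b ∧ IntervalIntegrable C μ a b := by
  have hst' : s - t ≠ 0 := sub_ne_zero.2 hst
  have hC : IntervalIntegrable C μ a b := by
    have := ((hPs.sub hA).const_mul t).sub ((hPt.sub hA).const_mul s)
      |>.const_mul (s * t * (s - t))⁻¹
    refine this.congr (fun x _ => ?_)
    field_simp
    ring
  refine ⟨?_, hC⟩
  have := ((hPs.sub hA).sub (hC.const_mul (s ^ 2))).const_mul s⁻¹
  refine this.congr (fun x _ => ?_)
  field_simp
  ring

theorem eq_of_hasDerivWithinAt_Ici_quadratic {a b c d : ℝ}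
    (h : HasDerivWithinAt (fun t => a + t * b + t ^ 2 * c) d (Ici 0) 0) : d = b := by
  have hq : HasDerivAt (fun t => a + t * b + t ^ 2 * c) b 0 := by
    simpa using (((hasDerivAt_id' (0 : ℝ)).mul_const b).const_add a).fun_add
      ((hasDerivAt_pow 2 (0 : ℝ)).mul_const c)
  exact (uniqueDiffOn_Ici 0 0 self_mem_Ici).eq_deriv _ h hq.hasDerivWithinAt

section Energy

variable {n : ℕ} {β : ℝ}

noncomputable def energyForm (n : ℕ) (f g : ℝ → ℝ) (x : ℝ) : ℝ :=
  x ^ ((n : ℤ) - 1) * deriv f x * deriv g x + ((n : ℝ) - 1) * x ^ ((n : ℤ) - 3) * f x * g x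

theorem energyForm_self (g : ℝ → ℝ) :
    energyForm n g g = fun x =>
      x ^ ((n : ℤ) - 1) * (deriv g x) ^ 2 + ((n : ℝ) - 1) * x ^ ((n : ℤ) - 3) * (g x) ^ 2 := by
  funext x
  simp only [energyForm]
  ring

theorem energy_eq_integral_energyForm (g : ℝ → ℝ) :
    energy n β g = 1 / 2 * ∫ x in (1 : ℝ)..β, energyForm n g g x := by
  rw [energyForm_self, energy]

theorem memK.intervalIntegrable_energyForm {α : ℝ} {g : ℝ → ℝ} (hg : memK n α β g) :
    IntervalIntegrable (energyForm n g g) volume 1 β := by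
  rw [energyForm_self]
  exact hg.2.2.1

theorem energyForm_add_mul {f h : ℝ → ℝ} {x : ℝ} (hf : DifferentiableAt ℝ f x)
    (hh : DifferentiableAt ℝ h x) (t : ℝ) :
    energyForm n (fun y => f y + t * h y) (fun y => f y + t * h y) x =
      energyForm n f f x + t * (2 * energyForm n f h x) + t ^ 2 * energyForm n h h x := by
  have hderiv : deriv (fun y => f y + t * h y) x = deriv f x + t * deriv h x := by
    rw [deriv_fun_add hf (hh.const_mul t), deriv_const_mul t hh]
  simp only [energyForm, hderiv]
  ring

variable {f h : ℝ → ℝ} (h1β : 1 ≤ β) (hf : ∀ x ∈ Ioo 1 β, DifferentiableAt ℝ f x)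
  (hh : ∀ x ∈ Ioo 1 β, DifferentiableAt ℝ h x)
include h1β hf hh

theorem intervalIntegrable_energyForm_of_add_mul {s t : ℝ} (hs : s ≠ 0) (ht : t ≠ 0)
    (hst : s ≠ t) (hA : IntervalIntegrable (energyForm n f f) volume 1 β)
    (hPs : IntervalIntegrable (energyForm n (fun y => f y + s * h y) (fun y => f y + s * h y))
      volume 1 β)
    (hPt : IntervalIntegrable (energyForm n (fun y => f y + t * h y) (fun y => f y + t * h y))
      volume 1 β) :
    IntervalIntegrable (energyForm n f h) volume 1 β ∧
      IntervalIntegrable (energyForm n h h) volume 1 β := by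
  have hP : ∀ r, EqOn (energyForm n (fun y => f y + r * h y) (fun y => f y + r * h y))
      (fun x => energyForm n f f x + r * (2 * energyForm n f h x) + r ^ 2 * energyForm n h h x)
      (uIoo 1 β) := fun r x hx =>
    energyForm_add_mul (hf x (uIoo_of_le h1β ▸ hx)) (hh x (uIoo_of_le h1β ▸ hx)) r
  obtain ⟨hB, hC⟩ := IntervalIntegrable.of_add_mul_add_sq_mul hs ht hst hA
    (hPs.congr_uIoo (hP s)) (hPt.congr_uIoo (hP t))
  refine ⟨(hB.const_mul (1 / 2)).congr fun x _ => ?_, hC⟩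
  ring

theorem energy_add_mul (hA : IntervalIntegrable (energyForm n f f) volume 1 β)
    (hB : IntervalIntegrable (energyForm n f h) volume 1 β)
    (hC : IntervalIntegrable (energyForm n h h) volume 1 β) (t : ℝ) :
    energy n β (fun x => f x + t * h x) =
      energy n β f + t * (∫ x in (1 : ℝ)..β, energyForm n f h x) + t ^ 2 * energy n β h := by
  simp only [energy_eq_integral_energyForm]
  rw [intervalIntegral.integral_congr_Ioo_of_le h1β
      fun x hx => energyForm_add_mul (hf x hx) (hh x hx) t,
    intervalIntegral.integral_add (hA.add (hB.const_mul 2 |>.const_mul t)) (hC.const_mul _),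
    intervalIntegral.integral_add hA (hB.const_mul 2 |>.const_mul t),
    intervalIntegral.integral_const_mul, intervalIntegral.integral_const_mul,
    intervalIntegral.integral_const_mul]
  ring

end Energy

section FirstVariation

variable {n : ℕ} {f h : ℝ → ℝ} {x : ℝ}

theorem hasDerivAt_zpow_mul_deriv_mul (hx : x ≠ 0) (hf : DifferentiableAt ℝ (deriv f) x)
    (hh : DifferentiableAt ℝ h x) :
    HasDerivAt (fun y => y ^ ((n : ℤ) - 1) * deriv f y * h y)
      (x ^ ((n : ℤ) - 1) * (deriv (deriv f) x + ((n : ℝ) - 1) * deriv f x / x) * h x +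
        x ^ ((n : ℤ) - 1) * deriv f x * deriv h x) x := by
  refine (((hasDerivAt_zpow ((n : ℤ) - 1) x (.inl hx)).mul hf.hasDerivAt).mul
    hh.hasDerivAt).congr_deriv ?_
  simp only [Pi.mul_apply]
  rw [zpow_sub₀ hx, zpow_sub₀ hx, zpow_one]
  push_cast
  field_simp
  ring

theorem eq_energyForm_of_ode (hx : x ≠ 0)
    (hode : deriv (deriv f) x + ((n : ℝ) - 1) * deriv f x / x - ((n : ℝ) - 1) * f x / x ^ 2 = 0) :
    x ^ ((n : ℤ) - 1) * (deriv (deriv f) x + ((n : ℝ) - 1) * deriv f x / x) * h x +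
      x ^ ((n : ℤ) - 1) * deriv f x * deriv h x = energyForm n f h x := by
  rw [show deriv (deriv f) x + ((n : ℝ) - 1) * deriv f x / x = ((n : ℝ) - 1) * f x / x ^ 2 by
    linarith, energyForm, show (n : ℤ) - 3 = (n : ℤ) - 1 - 2 by ring, zpow_sub₀ hx _ 2, zpow_two]
  field_simp
  ring

variable {a b : ℝ} (ha : 0 < a) (hab : a ≤ b)
  (hf2 : ∀ x ∈ Icc a b, DifferentiableAt ℝ f x ∧ DifferentiableAt ℝ (deriv f) x)
  (hode : ∀ x ∈ Icc a b, 1 < f x →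
    deriv (deriv f) x + ((n : ℝ) - 1) * deriv f x / x - ((n : ℝ) - 1) * f x / x ^ 2 = 0)
  (hoff : ∀ x ∈ Icc a b, ¬ 1 < f x → f x = 1)
  (hhc : ContinuousOn h (Icc a b)) (hhd : ∀ x ∈ Ioo a b, DifferentiableAt ℝ h x)
include ha hab hf2 hode hoff hhc hhd

theorem integral_energyForm_eq_integral_indicator (ha0 : h a = 0) (hb0 : h b = 0)
    (hint : IntervalIntegrable (energyForm n f h) volume a b) :
    ∫ x in a..b, energyForm n f h x = ∫ x in a..b,
      (Icc a b ∩ f ⁻¹' {1}).indicator (fun x => ((n : ℝ) - 1) * x ^ ((n : ℤ) - 3) * h x) x := by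
  have hpos : ∀ x ∈ Icc a b, x ≠ 0 := fun x hx => (ha.trans_le hx.1).ne'
  set w := (Icc a b ∩ f ⁻¹' {1}).indicator (fun x => ((n : ℝ) - 1) * x ^ ((n : ℤ) - 3) * h x)
    with hw_def
  set ψ := fun x => x ^ ((n : ℤ) - 1) * (deriv (deriv f) x + ((n : ℝ) - 1) * deriv f x / x) * h x +
    x ^ ((n : ℤ) - 1) * deriv f x * deriv h x
  have hw : IntervalIntegrable w volume a b := by
    have hcont : ContinuousOn (fun x => ((n : ℝ) - 1) * x ^ ((n : ℤ) - 3) * h x) (Icc a b) :=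
      (continuousOn_const.mul (continuousOn_id.zpow₀ _ fun x hx => .inl (hpos x hx))).mul hhc
    have hS : MeasurableSet (Icc a b ∩ f ⁻¹' {1}) :=
      (ContinuousOn.preimage_isClosed_of_isClosed
        (fun x hx => (hf2 x hx).1.continuousAt.continuousWithinAt) isClosed_Icc
        isClosed_singleton).measurableSet
    rw [intervalIntegrable_iff_integrableOn_Ioc_of_le hab]
    exact (hcont.integrableOn_Icc.mono_set Ioc_subset_Icc_self).indicator hS
  have hψ : ψ =ᵐ[volume.restrict (Ι a b)] fun x => energyForm n f h x - w x := by
    rw [uIoc_of_le hab, ← restrict_Ioo_eq_restrict_Ioc]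
    filter_upwards [ae_restrict_mem measurableSet_Ioo,
      ae_deriv_eq_zero_and_deriv_deriv_eq_zero_of_eq f 1] with x hx hcontact
    have hxI := Ioo_subset_Icc_self hx
    by_cases hfx : 1 < f x
    · rw [hw_def, indicator_of_notMem fun hS : x ∈ Icc a b ∩ f ⁻¹' {1} => hfx.ne' hS.2, sub_zero]
      exact eq_energyForm_of_ode (hpos x hxI) (hode x hxI hfx)
    · have hf1 := hoff x hxI hfx
      obtain ⟨hf', hf''⟩ := hcontact hf1
      rw [hw_def, indicator_of_mem (show x ∈ Icc a b ∩ f ⁻¹' {1} from ⟨hxI, hf1⟩)]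
      simp [ψ, energyForm, hf', hf'', hf1]
  have hφ : ContinuousOn (fun y => y ^ ((n : ℤ) - 1) * deriv f y * h y) (Icc a b) :=
    ((continuousOn_id.zpow₀ _ fun x hx => .inl (hpos x hx)).mul
      fun x hx => (hf2 x hx).2.continuousAt.continuousWithinAt).mul hhc
  have hFTC := intervalIntegral.integral_eq_sub_of_hasDerivAt_of_le hab hφ
    (fun x hx => hasDerivAt_zpow_mul_deriv_mul (hpos x (Ioo_subset_Icc_self hx))
      (hf2 x (Ioo_subset_Icc_self hx)).2 (hhd x hx))
    ((hint.sub hw).congr_ae hψ.symm)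
  rw [intervalIntegral.integral_congr_ae_restrict hψ, intervalIntegral.integral_sub hint hw,
    ha0, hb0] at hFTC
  linarith

theorem integral_energyForm_nonneg (ha0 : h a = 0) (hb0 : h b = 0)
    (hint : IntervalIntegrable (energyForm n f h) volume a b) (hn : 1 ≤ n)
    (hh_nonneg : ∀ x ∈ Icc a b, f x = 1 → 0 ≤ h x) :
    0 ≤ ∫ x in a..b, energyForm n f h x := by
  rw [integral_energyForm_eq_integral_indicator ha hab hf2 hode hoff hhc hhd ha0 hb0 hint]
  refine intervalIntegral.integral_nonneg hab fun x _ => indicator_nonneg (fun y hy => ?_) x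
  exact mul_nonneg (mul_nonneg (sub_nonneg.2 (by exact_mod_cast hn))
    (zpow_pos (ha.trans_le hy.1.1) _).le) (hh_nonneg y hy.1 hy.2)

end FirstVariation

theorem stmt_10_general (n : ℕ) (hn : 2 ≤ n) (α β : ℝ) (hβ : α < β) (hα : 1 < α)
    (f : ℝ → ℝ)
    (hf2 : ∀ x ∈ Set.Icc (1 : ℝ) β, DifferentiableAt ℝ f x ∧ DifferentiableAt ℝ (deriv f) x)
    (hode : ∀ x ∈ Set.Icc (1 : ℝ) β, 1 < f x →
      deriv (deriv f) x + ((n : ℝ) - 1) * deriv f x / x - ((n : ℝ) - 1) * f x / x ^ 2 = 0)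
    (hoff : ∀ x ∈ Set.Icc (1 : ℝ) β, ¬ 1 < f x → f x = 1)
    (hK : memK n α β f) :
    ∀ h : ℝ → ℝ, ContinuousOn h (Set.Icc 1 β) →
      (∀ x ∈ Set.Ioo (1 : ℝ) β, DifferentiableAt ℝ h x) →
      h 1 = 0 → h β = 0 →
      (∃ ε > (0 : ℝ), ∀ t ∈ Set.Ioc (0 : ℝ) ε, memK n α β (fun x => f x + t * h x)) →
      ∀ d : ℝ,
        HasDerivWithinAt (fun t : ℝ => energy n β (fun x => f x + t * h x)) d (Set.Ici 0) 0 →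
        0 ≤ d := by
  intro h hhc hhd hh1 hhβ ⟨ε, hε, hmem⟩ d hd
  have h1β : (1 : ℝ) ≤ β := by linarith
  have hfd : ∀ x ∈ Ioo 1 β, DifferentiableAt ℝ f x := fun x hx => (hf2 x (Ioo_subset_Icc_self hx)).1
  have hA := hK.intervalIntegrable_energyForm
  have hmemε := hmem ε ⟨hε, le_rfl⟩
  obtain ⟨hB, hC⟩ := intervalIntegrable_energyForm_of_add_mul h1β hfd hhd (half_pos hε).ne'
    hε.ne' (by linarith) hA (hmem _ ⟨half_pos hε, by linarith⟩).intervalIntegrable_energyForm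
    hmemε.intervalIntegrable_energyForm
  simp only [energy_add_mul h1β hfd hhd hA hB hC] at hd
  rw [eq_of_hasDerivWithinAt_Ici_quadratic hd]
  refine integral_energyForm_nonneg one_pos h1β hf2 hode hoff hhc hhd hh1 hhβ hB (by omega)
    fun x hx hfx => ?_
  have hpert : 1 ≤ f x + ε * h x := hmemε.2.2.2.2.2 x hx
  rw [hfx] at hpert
  exact (mul_nonneg_iff_of_pos_left hε).1 (by linarith)

/-- A `C¹` function solving the ODE on `{f > 1}`, equal to `1` elsewhere, with the
right boundary values and `f ≥ 1`, is a critical point of `E` over `K` in the variational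
inequality sense: every one-sided derivative at `t = 0⁺` along admissible directions is `≥ 0`. -/
theorem stmt_10 (n : ℕ) (hn : 2 ≤ n) (α β : ℝ) (hβ : α < β) (hα : 1 < α)
    (f : ℝ → ℝ)
    (hf2 : ∀ x ∈ Set.Icc (1 : ℝ) β, DifferentiableAt ℝ f x ∧ DifferentiableAt ℝ (deriv f) x)
    (hC1 : ContinuousOn (deriv f) (Set.Icc 1 β))
    (hode : ∀ x ∈ Set.Icc (1 : ℝ) β, 1 < f x →
      deriv (deriv f) x + ((n : ℝ) - 1) * deriv f x / x - ((n : ℝ) - 1) * f x / x ^ 2 = 0)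
    (hoff : ∀ x ∈ Set.Icc (1 : ℝ) β, ¬ 1 < f x → f x = 1)
    (hK : memK n α β f) :
    ∀ h : ℝ → ℝ, ContinuousOn h (Set.Icc 1 β) →
      (∀ x ∈ Set.Ioo (1 : ℝ) β, DifferentiableAt ℝ h x) →
      h 1 = 0 → h β = 0 →
      (∃ ε > (0 : ℝ), ∀ t ∈ Set.Ioc (0 : ℝ) ε, memK n α β (fun x => f x + t * h x)) →
      ∀ d : ℝ,
        HasDerivWithinAt (fun t : ℝ => energy n β (fun x => f x + t * h x)) d (Set.Ici 0) 0 →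
        0 ≤ d :=
  stmt_10_general n hn α β hβ hα f hf2 hode hoff hK
end

section
/- Let m, n ≥ 0, 1 ≤ k ≤ n be integers and b, b' > 0 real. Suppose f : [0, b'] → ℝ is a differentiable function with f(0)=0, f(b')=b, f ≥ 0, f' ≥ 0, satisfying G^{m,n,k}_1(f(x), x) = α G^{m,n}_1(x) for all x, where α = G^{m,n,k}_1(b, b')/G^{m,n}_1(b'). If at some interior point x₀ ∈ (0, b') one has f'(x₀) = 0 and f(x₀) > 0, then f''(x₀) > 0 (assuming f is twice differentiable at x₀). Consequently the zeros of f' in (0,b') are isolated and f is strictly increasing on [0, b']. -/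
/-- `G^{m,n}_a(x) = ∫₀^x s^m (s+a)^n ds`. -/
noncomputable def Gmn (m n : ℕ) (a x : ℝ) : ℝ :=
  ∫ s in (0 : ℝ)..x, s ^ m * (s + a) ^ n

/-- `G^{m,n,k}_1(f,x) = (1/k!) (d^k/dt^k)|_{t=0} G^{m,n}_{1+t}(x + t f)`. -/
noncomputable def Gmnk (m n k : ℕ) (f x : ℝ) : ℝ :=
  (1 / (Nat.factorial k : ℝ)) * iteratedDeriv k (fun t : ℝ => Gmn m n (1 + t) (x + t * f)) 0

/-!
Differentiating `G^{m,n,k}_1(f(x), x) = α G^{m,n}_1(x)` in `x` and dividing by `x^m (1+x)^n`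
gives `σ_k(u, v) + f' σ_{k-1}(u, v) = α`, where `σ_i(u, v)` is the elementary symmetric function of
the vector with `u = f/x` repeated `m` times and `v = (1+f)/(1+x)` repeated `n` times. At a point
where `f' = 0` and `f ≥ 0`, `u` is nonincreasing and `v` strictly decreasing, so `σ_k(u, v)` has
negative derivative; differentiating the identity once more, `f'' σ_{k-1}(u, v)` must be positive,
and `σ_{k-1}(u, v) > 0`. A monotone `f` that is not strictly monotone is constant on an interval,
where `f' = f'' = 0`, so strict monotonicity follows.
-/

open scoped Polynomial
open Polynomial (C X derivative)
open Set Filter Topology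

section PolynomialCalculus

variable {𝕜 : Type*} [NontriviallyNormedField 𝕜]

theorem Polynomial.iteratedDeriv_eval (p : 𝕜[X]) (k : ℕ) :
    iteratedDeriv k (fun t => p.eval t) = fun t => (derivative^[k] p).eval t := by
  induction k generalizing p with
  | zero => simp
  | succ k ih =>
    have hderiv : deriv (fun t => p.eval t) = fun t => p.derivative.eval t := by
      ext; exact p.deriv
    rw [iteratedDeriv_succ', hderiv, ih, Function.iterate_succ_apply]

theorem Polynomial.iteratedDeriv_eval_zero (p : 𝕜[X]) (k : ℕ) :
    iteratedDeriv k (fun t => p.eval t) 0 = k.factorial * p.coeff k := by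
  rw [iteratedDeriv_eval]
  dsimp only
  rw [← coeff_zero_eq_eval_zero, coeff_iterate_derivative, zero_add,
    Nat.descFactorial_self, nsmul_eq_mul]

-- Lagrange interpolation at the nodes `0, 1, …, N` makes each coefficient of a polynomial of
-- degree `≤ N` a fixed linear combination of its values, so it inherits their derivatives.
theorem Polynomial.hasDerivAt_coeff_of_hasDerivAt_eval [CharZero 𝕜] {P : 𝕜 → 𝕜[X]} {R : 𝕜[X]}
    {x : 𝕜} {N : ℕ} (hP : ∀ y, (P y).natDegree ≤ N) (hR : R.natDegree ≤ N)
    (h : ∀ t, HasDerivAt (fun y => (P y).eval t) (R.eval t) x) (i : ℕ) :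
    HasDerivAt (fun y => (P y).coeff i) (R.coeff i) x := by
  set ℓ := Lagrange.basis (Finset.range (N + 1)) (fun j : ℕ => (j : 𝕜))
  have hcoeff (p : 𝕜[X]) (hp : p.natDegree ≤ N) :
      p.coeff i = ∑ j ∈ Finset.range (N + 1), p.eval (j : 𝕜) * (ℓ j).coeff i := by
    have hdeg : p.degree < (Finset.range (N + 1)).card :=
      degree_le_natDegree.trans_lt (by
        rw [Finset.card_range]; exact WithBot.coe_lt_coe.mpr (Nat.lt_succ_of_le hp))
    conv_lhs => rw [Lagrange.eq_interpolate (fun a _ b _ hab => Nat.cast_injective hab) hdeg]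
    simp [Lagrange.interpolate_apply, coeff_C_mul, ℓ]
  have hfun : (fun y => (P y).coeff i) =
      fun y => ∑ j ∈ Finset.range (N + 1), (P y).eval (j : 𝕜) * (ℓ j).coeff i := by
    ext y; exact hcoeff (P y) (hP y)
  rw [hcoeff R hR, hfun]
  exact HasDerivAt.fun_sum fun j _ => (h j).mul_const _

end PolynomialCalculus

theorem strictMonoOn_Icc_of_deriv_nonneg_of_deriv_deriv_ne_zero {f : ℝ → ℝ} {a b : ℝ}
    (hf : ContinuousOn f (Icc a b)) (hfd : DifferentiableOn ℝ f (Ioo a b)) (hf' : ∀ x ∈ Ioo a b, 0 ≤ deriv f x)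
    (hf'' : ∀ x ∈ Ioo a b, deriv f x = 0 → deriv (deriv f) x ≠ 0) :
    StrictMonoOn f (Icc a b) := by
  have hmono : MonotoneOn f (Icc a b) :=
    monotoneOn_of_deriv_nonneg (convex_Icc a b) hf (by rwa [interior_Icc])
      (by rwa [interior_Icc])
  intro x hx y hy hxy
  refine (hmono hx hy hxy.le).lt_of_ne fun hfxy => ?_
  have hsub : Ioo x y ⊆ Ioo a b := Ioo_subset_Ioo hx.1 hy.2
  have hconst : ∀ z ∈ Ioo x y, f z = f x := fun z hz =>
    le_antisymm (hfxy ▸ hmono ⟨hx.1.trans hz.1.le, hz.2.le.trans hy.2⟩ hy hz.2.le)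
      (hmono hx ⟨hx.1.trans hz.1.le, hz.2.le.trans hy.2⟩ hz.1.le)
  have hderiv : ∀ z ∈ Ioo x y, deriv f z = 0 := fun z hz => by
    rw [(eventuallyEq_of_mem (isOpen_Ioo.mem_nhds hz) hconst : f =ᶠ[𝓝 z] fun _ => f x).deriv_eq,
      deriv_const]
  have hz : (x + y) / 2 ∈ Ioo x y := ⟨by linarith, by linarith⟩
  refine hf'' _ (hsub hz) (hderiv _ hz) ?_
  have hderiv_eq : deriv f =ᶠ[𝓝 ((x + y) / 2)] fun _ => 0 :=
    eventuallyEq_of_mem (isOpen_Ioo.mem_nhds hz) hderiv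
  rw [hderiv_eq.deriv_eq, deriv_const]

theorem hasDerivAt_Gmn (m n : ℕ) (a x : ℝ) :
    HasDerivAt (Gmn m n a) (x ^ m * (x + a) ^ n) x :=
  ((by fun_prop : Continuous fun s : ℝ => s ^ m * (s + a) ^ n).integral_hasStrictDerivAt
    0 x).hasDerivAt

theorem Gmn_eq_sum (m n : ℕ) (a x : ℝ) :
    Gmn m n a x = ∑ j ∈ Finset.range (n + 1),
      (n.choose j / (m + j + 1 : ℝ)) * a ^ (n - j) * x ^ (m + j + 1) := by
  have hexpand (s : ℝ) : s ^ m * (s + a) ^ n =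
      ∑ j ∈ Finset.range (n + 1), (n.choose j * a ^ (n - j)) * s ^ (m + j) := by
    rw [add_pow, Finset.mul_sum]
    exact Finset.sum_congr rfl fun j _ => by ring
  simp only [Gmn, hexpand]
  rw [intervalIntegral.integral_finsetSum fun j _ =>
    (by fun_prop : Continuous _).intervalIntegrable _ _]
  refine Finset.sum_congr rfl fun j _ => ?_
  rw [intervalIntegral.integral_const_mul, integral_pow]
  push_cast
  ring

noncomputable def gmnPoly (m n : ℕ) (c x : ℝ) : ℝ[X] :=
  ∑ j ∈ Finset.range (n + 1), C (n.choose j / (m + j + 1 : ℝ)) * (1 + X) ^ (n - j) *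
    (C x + C c * X) ^ (m + j + 1)

theorem eval_gmnPoly (m n : ℕ) (c x t : ℝ) :
    (gmnPoly m n c x).eval t = Gmn m n (1 + t) (x + t * c) := by
  simp only [gmnPoly, Gmn_eq_sum, Polynomial.eval_finsetSum, Polynomial.eval_mul,
    Polynomial.eval_pow, Polynomial.eval_add, Polynomial.eval_C, Polynomial.eval_X,
    Polynomial.eval_one]
  exact Finset.sum_congr rfl fun j _ => by ring

theorem natDegree_gmnPoly_le (m n : ℕ) (c x : ℝ) : (gmnPoly m n c x).natDegree ≤ m + n + 1 := by
  refine Polynomial.natDegree_sum_le_of_forall_le _ _ fun j hj => ?_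
  have := Finset.mem_range.mp hj
  compute_degree
  omega

theorem Gmnk_eq_coeff_gmnPoly (m n k : ℕ) (c x : ℝ) :
    Gmnk m n k c x = (gmnPoly m n c x).coeff k := by
  have hfun : (fun t => Gmn m n (1 + t) (x + t * c)) = fun t => (gmnPoly m n c x).eval t := by
    ext t; rw [eval_gmnPoly]
  rw [Gmnk, hfun, Polynomial.iteratedDeriv_eval_zero]
  field_simp

-- `esymmPair m n i u v` is the elementary symmetric function `σ_i` of the vector in which `u`
-- occurs `m` times and `v` occurs `n` times.
noncomputable def esymmPair (m n i : ℕ) (u v : ℝ) : ℝ :=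
  ((1 + C u * X) ^ m * (1 + C v * X) ^ n).coeff i

theorem coeff_one_add_C_mul_X_pow (u : ℝ) (m i : ℕ) :
    ((1 + C u * X) ^ m).coeff i = m.choose i * u ^ i := by
  have : (1 + C u * X) ^ m = ((1 + X) ^ m).comp (C u * X) := by
    simp [Polynomial.pow_comp]
  rw [this, Polynomial.comp_C_mul_X_coeff, Polynomial.coeff_one_add_X_pow]

theorem esymmPair_eq_sum (m n i : ℕ) (u v : ℝ) :
    esymmPair m n i u v =
      ∑ p ∈ Finset.range (i + 1), m.choose p * n.choose (i - p) * (u ^ p * v ^ (i - p)) := by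
  rw [esymmPair, Polynomial.coeff_mul, Finset.Nat.sum_antidiagonal_eq_sum_range_succ_mk]
  refine Finset.sum_congr rfl fun p _ => ?_
  rw [coeff_one_add_C_mul_X_pow, coeff_one_add_C_mul_X_pow]
  ring

theorem esymmPair_pos {m n i : ℕ} (hin : i ≤ n) {u v : ℝ} (hu : 0 ≤ u) (hv : 0 < v) :
    0 < esymmPair m n i u v := by
  rw [esymmPair_eq_sum]
  refine Finset.sum_pos' (fun p _ => by positivity) ⟨0, by simp, ?_⟩
  have := Nat.choose_pos hin
  simp only [Nat.choose_zero_right, Nat.sub_zero, pow_zero]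
  positivity

theorem coeff_esymmPair_mul_succ (m n k : ℕ) (u v w : ℝ) :
    ((1 + C u * X) ^ m * (1 + C v * X) ^ n * (1 + C w * X)).coeff (k + 1) =
      esymmPair m n (k + 1) u v + w * esymmPair m n k u v := by
  rw [mul_add, mul_one, Polynomial.coeff_add, mul_left_comm, ← mul_assoc, Polynomial.coeff_mul_X,
    Polynomial.coeff_C_mul, esymmPair, esymmPair]

section PathDeriv

variable {m n i : ℕ} {u v : ℝ → ℝ} {x : ℝ}

theorem DifferentiableAt.esymmPair (hu : DifferentiableAt ℝ u x) (hv : DifferentiableAt ℝ v x) :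
    DifferentiableAt ℝ (fun y => esymmPair m n i (u y) (v y)) x := by
  simp only [esymmPair_eq_sum]
  fun_prop

-- Every monomial `u ^ p * v ^ (i - p)` is nonincreasing along the path, and the one with
-- `p = 0` strictly decreasing.
theorem HasDerivAt.esymmPair_neg {U V : ℝ} (hu : HasDerivAt u U x) (hv : HasDerivAt v V x)
    (hi : 1 ≤ i) (hin : i ≤ n) (hu0 : 0 ≤ u x) (hU : U ≤ 0) (hv0 : 0 < v x) (hV : V < 0) :
    ∃ D < 0, HasDerivAt (fun y => esymmPair m n i (u y) (v y)) D x := by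
  simp only [esymmPair_eq_sum]
  refine ⟨_, Finset.sum_neg' (fun p _ => ?_) ⟨0, by simp, ?_⟩,
    HasDerivAt.fun_sum fun p _ => ((hu.fun_pow p).fun_mul (hv.fun_pow (i - p))).const_mul
      ((m.choose p : ℝ) * n.choose (i - p))⟩
  · have h1 : (p : ℝ) * u x ^ (p - 1) * U ≤ 0 := mul_nonpos_of_nonneg_of_nonpos (by positivity) hU
    have h2 : ((i - p : ℕ) : ℝ) * v x ^ (i - p - 1) * V ≤ 0 :=
      mul_nonpos_of_nonneg_of_nonpos (by positivity) hV.le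
    exact mul_nonpos_of_nonneg_of_nonpos (by positivity)
      (add_nonpos (mul_nonpos_of_nonpos_of_nonneg h1 (by positivity))
        (mul_nonpos_of_nonneg_of_nonpos (by positivity) h2))
  · have := Nat.choose_pos hin
    simp only [Nat.choose_zero_right, Nat.sub_zero, Nat.cast_zero, zero_mul, pow_zero, one_mul,
      zero_add, Nat.cast_one]
    exact mul_neg_of_pos_of_neg (by positivity) (mul_neg_of_pos_of_neg (by positivity) hV)

end PathDeriv

theorem hasDerivAt_Gmnk_comp {m n : ℕ} (k : ℕ) {f : ℝ → ℝ} {x : ℝ} (hf : DifferentiableAt ℝ f x)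
    (hx : x ≠ 0) (hx1 : 1 + x ≠ 0) :
    HasDerivAt (fun y => Gmnk m n (k + 1) (f y) y)
      (x ^ m * (1 + x) ^ n * (esymmPair m n (k + 1) (f x / x) ((1 + f x) / (1 + x)) +
        deriv f x * esymmPair m n k (f x / x) ((1 + f x) / (1 + x)))) x := by
  set u := f x / x
  set v := (1 + f x) / (1 + x)
  rw [← coeff_esymmPair_mul_succ, ← Polynomial.coeff_C_mul]
  simp only [Gmnk_eq_coeff_gmnPoly]
  refine Polynomial.hasDerivAt_coeff_of_hasDerivAt_eval
    (fun y => natDegree_gmnPoly_le m n (f y) y) ?_ (fun t => ?_) (k + 1)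
  · compute_degree
  · simp only [eval_gmnPoly]
    have hpath : HasDerivAt (fun y => y + t * f y) (1 + t * deriv f x) x :=
      (hasDerivAt_id x).add (hf.hasDerivAt.const_mul t)
    refine ((hasDerivAt_Gmn m n (1 + t) (x + t * f x)).comp x hpath).congr_deriv ?_
    have hu : x * (1 + u * t) = x + t * f x := by simp only [u]; field_simp
    have hv : (1 + x) * (1 + v * t) = x + t * f x + (1 + t) := by simp only [v]; field_simp; ring
    simp only [Polynomial.eval_mul, Polynomial.eval_pow, Polynomial.eval_add, Polynomial.eval_C,
      Polynomial.eval_X, Polynomial.eval_one]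
    rw [← hv, ← hu, mul_pow, mul_pow]
    ring

theorem esymmPair_eq_of_Gmnk_eq {m n k : ℕ} {f : ℝ → ℝ} {α y : ℝ} (hy : 0 < y)
    (hf : DifferentiableAt ℝ f y)
    (heq : ∀ᶠ x in 𝓝 y, Gmnk m n (k + 1) (f x) x = α * Gmn m n 1 x) :
    esymmPair m n (k + 1) (f y / y) ((1 + f y) / (1 + y)) +
      deriv f y * esymmPair m n k (f y / y) ((1 + f y) / (1 + y)) = α := by
  have hderiv := (hasDerivAt_Gmnk_comp k hf hy.ne' (by positivity)).unique
    (((hasDerivAt_Gmn m n 1 y).const_mul α).congr_of_eventuallyEq heq)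
  rw [add_comm y 1] at hderiv
  have : 0 < y ^ m * (1 + y) ^ n := by positivity
  exact mul_left_cancel₀ this.ne' (hderiv.trans (mul_comm _ _))

theorem deriv_deriv_pos_of_esymmPair_eq {m n k : ℕ} (hkn : k + 1 ≤ n) {f : ℝ → ℝ} {α x₀ : ℝ}
    (hx₀ : 0 < x₀) (hf : DifferentiableAt ℝ f x₀) (hf' : DifferentiableAt ℝ (deriv f) x₀)
    (hfx₀ : 0 ≤ f x₀) (hcrit : deriv f x₀ = 0)
    (heq : (fun y => esymmPair m n (k + 1) (f y / y) ((1 + f y) / (1 + y)) +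
      deriv f y * esymmPair m n k (f y / y) ((1 + f y) / (1 + y))) =ᶠ[𝓝 x₀] fun _ => α) :
    0 < deriv (deriv f) x₀ := by
  have hu := hf.hasDerivAt.fun_div (hasDerivAt_id' x₀) hx₀.ne'
  have hv := (hf.hasDerivAt.const_add 1).fun_div ((hasDerivAt_id' x₀).const_add 1) (by positivity)
  rw [hcrit] at hu hv
  obtain ⟨D, hD, hσ⟩ := hu.esymmPair_neg hv (by omega) hkn (div_nonneg hfx₀ hx₀.le)
    (div_nonpos_of_nonpos_of_nonneg (by linarith) (by positivity)) (by positivity)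
    (div_neg_of_neg_of_pos (by linarith) (by positivity))
  have hσk := (hu.differentiableAt.esymmPair hv.differentiableAt (m := m) (n := n) (i := k)
    ).hasDerivAt
  have hzero := (hσ.add (hf'.hasDerivAt.mul hσk)).unique
    ((hasDerivAt_const x₀ α).congr_of_eventuallyEq heq)
  have hpos : 0 < esymmPair m n k (f x₀ / x₀) ((1 + f x₀) / (1 + x₀)) :=
    esymmPair_pos (by omega) (by positivity) (by positivity)
  rw [hcrit, zero_mul, add_zero] at hzero
  exact pos_of_mul_pos_left (by linarith) hpos.le

theorem stmt_14_general (m n k : ℕ) (hk : 1 ≤ k) (hkn : k ≤ n) (b' : ℝ)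
    (f : ℝ → ℝ) (hfd : Differentiable ℝ f)
    (hf2 : ∀ x ∈ Set.Ioo (0 : ℝ) b', DifferentiableAt ℝ (deriv f) x)
    (hfpos : ∀ x ∈ Set.Icc (0 : ℝ) b', 0 ≤ f x)
    (hfmono : ∀ x ∈ Set.Icc (0 : ℝ) b', 0 ≤ deriv f x)
    (α : ℝ)
    (heq : ∀ x ∈ Set.Icc (0 : ℝ) b', Gmnk m n k (f x) x = α * Gmn m n 1 x) :
    (∀ x₀ ∈ Set.Ioo (0 : ℝ) b', deriv f x₀ = 0 → 0 < f x₀ → 0 < deriv (deriv f) x₀) ∧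
    StrictMonoOn f (Set.Icc 0 b') := by
  obtain ⟨k, rfl⟩ : ∃ k', k = k' + 1 := ⟨k - 1, by omega⟩
  have hcrit (x₀ : ℝ) (hx₀ : x₀ ∈ Ioo 0 b') (h0 : deriv f x₀ = 0) : 0 < deriv (deriv f) x₀ := by
    refine deriv_deriv_pos_of_esymmPair_eq (m := m) (α := α) hkn hx₀.1 (hfd x₀) (hf2 x₀ hx₀)
      (hfpos x₀ (Ioo_subset_Icc_self hx₀)) h0 ?_
    filter_upwards [isOpen_Ioo.mem_nhds hx₀] with y hy
    refine esymmPair_eq_of_Gmnk_eq hy.1 (hfd y) ?_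
    filter_upwards [isOpen_Ioo.mem_nhds hy] with x hx using heq x (Ioo_subset_Icc_self hx)
  exact ⟨fun x₀ hx₀ h0 _ => hcrit x₀ hx₀ h0,
    strictMonoOn_Icc_of_deriv_nonneg_of_deriv_deriv_ne_zero hfd.continuous.continuousOn
      hfd.differentiableOn (fun x hx => hfmono x (Ioo_subset_Icc_self hx)) fun x hx h0 => (hcrit x hx h0).ne'⟩

/-- for a monotone nonnegative solution of `G^{m,n,k}_1(f(x),x) = α G^{m,n}_1(x)`
with the given boundary data, at any interior point where `f' = 0` and `f > 0` one has
`f'' > 0`; consequently `f` is strictly increasing on `[0, b']`. -/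
theorem stmt_14 (m n k : ℕ) (hk : 1 ≤ k) (hkn : k ≤ n) (b b' : ℝ) (hb : 0 < b) (hb' : 0 < b')
    (f : ℝ → ℝ) (hfd : Differentiable ℝ f)
    (hf2 : ∀ x ∈ Set.Ioo (0 : ℝ) b', DifferentiableAt ℝ (deriv f) x)
    (hf0 : f 0 = 0) (hfb : f b' = b)
    (hfpos : ∀ x ∈ Set.Icc (0 : ℝ) b', 0 ≤ f x)
    (hfmono : ∀ x ∈ Set.Icc (0 : ℝ) b', 0 ≤ deriv f x)
    (α : ℝ) (hα : α = Gmnk m n k b b' / Gmn m n 1 b')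
    (heq : ∀ x ∈ Set.Icc (0 : ℝ) b', Gmnk m n k (f x) x = α * Gmn m n 1 x) :
    (∀ x₀ ∈ Set.Ioo (0 : ℝ) b', deriv f x₀ = 0 → 0 < f x₀ → 0 < deriv (deriv f) x₀) ∧
    StrictMonoOn f (Set.Icc 0 b') :=
  stmt_14_general m n k hk hkn b' f hfd hf2 hfpos hfmono α heq
end
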